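/- (Crypto lemma, independence form.) If Y is any ℝⁿ-valued random vector and U is uniformly distributed over the fundamental domain F and independent of Y, then fract_b(Y + U), i.e. (Y + U) mod Λ, is uniformly distributed over F and independent of Y. (This justifies that the dithered quantization error E_q := (α₁(X+Z₁) + U) mod Λ_q is uniform over the quantizer's Voronoi region and independent of everything else.) -/

import Mathlib

/-!
Conditionally on `Y = y`, the vector `fract b (y + U)` is the image of the uniform law on the
fundamental domain `F` under `u ↦ fract b (y + u)`, and this map preserves Lebesgue measure on
`F`: translating `F` by `y` gives another fundamental domain of the lattice, and `fract b`
folds it back onto `F` piece by piece. Hence the skew map `(y, u) ↦ (y, fract b (y + u))`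
preserves the product law of `(Y, U)`, which is the joint law of `(Y, fract b (Y + U))`.
-/

open MeasureTheory ProbabilityTheory Pointwise

namespace ZSpan

variable {E ι : Type*} [NormedAddCommGroup E] [NormedSpace ℝ E]
  [MeasurableSpace E] [BorelSpace E] [Fintype ι] (b : Module.Basis ι ℝ E)

theorem measurable_fract : Measurable (fract b) := by
  have : FiniteDimensional ℝ E := b.finiteDimensional_of_finite
  have hcoord : fract b = b.equivFun.symm ∘ (fun v i => Int.fract (v i)) ∘ b.equivFun := by
    funext m
    apply b.equivFun.injective
    ext i
    simp only [Function.comp_apply, LinearEquiv.apply_symm_apply, Module.Basis.equivFun_apply,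
      repr_fract_apply]
  have hfract : Measurable fun (v : ι → ℝ) i => Int.fract (v i) :=
    measurable_pi_lambda _ fun i => _root_.measurable_fract.comp (measurable_pi_apply i)
  let e := b.equivFun.toContinuousLinearEquiv
  rw [hcoord]
  exact e.symm.continuous.measurable.comp (hfract.comp e.continuous.measurable)

theorem map_fract_const_add_restrict (μ : Measure E) [μ.IsAddLeftInvariant] (y : E) :
    (μ.restrict (fundamentalDomain b)).map (fun u => fract b (y + u))
      = μ.restrict (fundamentalDomain b) := by
  set F := fundamentalDomain b
  have : Countable (Submodule.span ℤ (Set.range b)).toAddSubgroup :=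
    inferInstanceAs (Countable (Submodule.span ℤ (Set.range b)))
  have hF := ZSpan.isAddFundamentalDomain' b μ
  have hT : Measurable fun u => fract b (y + u) :=
    (measurable_fract b).comp (measurable_const_add y)
  ext s hs
  rw [Measure.map_apply hT hs, Measure.restrict_apply (hT hs), Measure.restrict_apply hs]
  have hperiodic : ∀ g : (Submodule.span ℤ (Set.range b)).toAddSubgroup,
      (g +ᵥ ·) ⁻¹' (fract b ⁻¹' s) = fract b ⁻¹' s := fun g => by
    ext x
    simp [AddSubgroup.vadd_def, fract_zSpan_add b x g.2]
  calc μ ((fun u => fract b (y + u)) ⁻¹' s ∩ F)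
      = μ ((y + ·) ⁻¹' (fract b ⁻¹' s ∩ (y +ᵥ F))) := by
        congr 1; ext u; simp [Set.mem_vadd_set_iff_neg_vadd_mem]
    _ = μ (fract b ⁻¹' s ∩ (y +ᵥ F)) := measure_preimage_add μ y _
    _ = μ (fract b ⁻¹' s ∩ F) :=
        (hF.vadd_of_comm y).measure_set_eq hF (measurable_fract b hs) hperiodic
    _ = μ (s ∩ F) := by
        congr 1; ext x
        exact and_congr_left fun hx => by rw [Set.mem_preimage, fract_eq_self.mpr hx]

end ZSpan

namespace ProbabilityTheory.IndepFun

variable {Ω α β : Type*} [MeasurableSpace Ω] [MeasurableSpace α] [MeasurableSpace β]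
  {μ : Measure Ω} [IsProbabilityMeasure μ] {X : Ω → α} {U : Ω → β} {g : α → β → β}

theorem map_prodMk_skew_eq_prod (hXU : IndepFun X U μ) (hX : Measurable X) (hU : Measurable U)
    (hg : Measurable (Function.uncurry g)) (hinv : ∀ x, (μ.map U).map (g x) = μ.map U) :
    μ.map (fun ω => (X ω, g (X ω) (U ω))) = (μ.map X).prod (μ.map U) := by
  have hskew : MeasurePreserving (fun p : α × β => (p.1, g p.1 p.2))
      ((μ.map X).prod (μ.map U)) ((μ.map X).prod (μ.map U)) :=
    (MeasurePreserving.id _).skew_product hg (.of_forall hinv)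
  have hjoint : μ.map (fun ω => (X ω, U ω)) = (μ.map X).prod (μ.map U) :=
    (indepFun_iff_map_prod_eq_prod_map_map hX.aemeasurable hU.aemeasurable).1 hXU
  rw [← hskew.map_eq, ← hjoint, Measure.map_map hskew.measurable (hX.prodMk hU)]
  rfl

theorem map_skew_eq (hXU : IndepFun X U μ) (hX : Measurable X) (hU : Measurable U)
    (hg : Measurable (Function.uncurry g)) (hinv : ∀ x, (μ.map U).map (g x) = μ.map U) :
    μ.map (fun ω => g (X ω) (U ω)) = μ.map U := by
  have hV : Measurable fun ω => g (X ω) (U ω) := hg.comp (hX.prodMk hU)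
  have : IsProbabilityMeasure (μ.map X) := Measure.isProbabilityMeasure_map hX.aemeasurable
  calc μ.map (fun ω => g (X ω) (U ω))
      = (μ.map fun ω => (X ω, g (X ω) (U ω))).map Prod.snd :=
        (Measure.map_map measurable_snd (hX.prodMk hV)).symm
    _ = μ.map U := by
        rw [hXU.map_prodMk_skew_eq_prod hX hU hg hinv, Measure.map_snd_prod, measure_univ,
          one_smul]

theorem indepFun_skew (hXU : IndepFun X U μ) (hX : Measurable X) (hU : Measurable U)
    (hg : Measurable (Function.uncurry g)) (hinv : ∀ x, (μ.map U).map (g x) = μ.map U) :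
    IndepFun X (fun ω => g (X ω) (U ω)) μ := by
  have hV : Measurable fun ω => g (X ω) (U ω) := hg.comp (hX.prodMk hU)
  rw [indepFun_iff_map_prod_eq_prod_map_map hX.aemeasurable hV.aemeasurable,
    hXU.map_skew_eq hX hU hg hinv]
  exact hXU.map_prodMk_skew_eq_prod hX hU hg hinv

end ProbabilityTheory.IndepFun

theorem crypto_lemma_independence_general (n : ℕ)
    (b : Module.Basis (Fin n) ℝ (Fin n → ℝ))
    {Ω : Type*} [MeasurableSpace Ω] {μ : Measure Ω} [IsProbabilityMeasure μ]
    (Y U : Ω → (Fin n → ℝ)) (hY : Measurable Y) (hU : Measurable U)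
    (hUdist : Measure.map U μ
      = (volume (ZSpan.fundamentalDomain b))⁻¹ •
          volume.restrict (ZSpan.fundamentalDomain b))
    (hindep : IndepFun Y U μ) :
    Measure.map (fun ω => ZSpan.fract b (Y ω + U ω)) μ
        = (volume (ZSpan.fundamentalDomain b))⁻¹ •
            volume.restrict (ZSpan.fundamentalDomain b) ∧
    IndepFun Y (fun ω => ZSpan.fract b (Y ω + U ω)) μ := by
  have hfract : Measurable (Function.uncurry fun y u => ZSpan.fract b (y + u)) :=
    (ZSpan.measurable_fract b).comp (measurable_fst.add measurable_snd)
  have hinv : ∀ y, (μ.map U).map (fun u => ZSpan.fract b (y + u)) = μ.map U := fun y => by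
    rw [hUdist, Measure.map_smul, ZSpan.map_fract_const_add_restrict]
  rw [← hUdist]
  exact ⟨hindep.map_skew_eq hY hU hfract hinv, hindep.indepFun_skew hY hU hfract hinv⟩

/-- Crypto lemma, independence form: if `Y` is any `ℝⁿ`-valued random vector and `U` is
uniformly distributed over the fundamental domain `F` of the lattice generated by a basis
`b` and independent of `Y`, then `(Y + U) mod Λ` is uniformly distributed over `F` and
independent of `Y`. -/
theorem crypto_lemma_independence (n : ℕ) (hn : 1 ≤ n)
    (b : Module.Basis (Fin n) ℝ (Fin n → ℝ))
    {Ω : Type*} [MeasurableSpace Ω] {μ : Measure Ω} [IsProbabilityMeasure μ]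
    (Y U : Ω → (Fin n → ℝ)) (hY : Measurable Y) (hU : Measurable U)
    (hUdist : Measure.map U μ
      = (volume (ZSpan.fundamentalDomain b))⁻¹ •
          volume.restrict (ZSpan.fundamentalDomain b))
    (hindep : IndepFun Y U μ) :
    Measure.map (fun ω => ZSpan.fract b (Y ω + U ω)) μ
        = (volume (ZSpan.fundamentalDomain b))⁻¹ •
            volume.restrict (ZSpan.fundamentalDomain b) ∧
    IndepFun Y (fun ω => ZSpan.fract b (Y ω + U ω)) μ :=
  crypto_lemma_independence_general n b Y U hY hU hUdist hindep
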